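/- arXiv:1411.2283 — 2 statements merged into one kernel-verified Lean document; each statement's English description precedes it below -/
import Mathlib

section
/- Let A : ℝ → Matrix (Fin n) (Fin n) ℝ be continuous, and suppose A(σ) commutes with A(τ) for all σ, τ ∈ [0,λ]. Then the unique solution of F'(σ) = F(σ) * A(σ), F(0) = 1, is given by the ordinary matrix exponential F(σ) = exp(∫₀^σ A(τ) dτ). -/
attribute [local instance] Matrix.linftyOpNormedRing Matrix.linftyOpNormedAlgebra

open scoped Topology

/-- Derivative (within a set) of the exponential of a path whose value at the base point
commutes with all values on the set. -/
lemma exp_comp_hasDerivWithinAt {𝔸 : Type*} [NormedRing 𝔸] [NormedAlgebra ℝ 𝔸]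
    [NormedAlgebra ℚ 𝔸] [CompleteSpace 𝔸] {g : ℝ → 𝔸} {g' : 𝔸} {s : Set ℝ} {σ : ℝ} (hσ : σ ∈ s)
    (hg : HasDerivWithinAt g g' s σ)
    (hc : ∀ t ∈ s, Commute (g σ) (g t)) :
    HasDerivWithinAt (fun t => NormedSpace.exp (g t))
      (NormedSpace.exp (g σ) * g') s σ := by
  have key : ∀ t ∈ s, NormedSpace.exp (g σ) * NormedSpace.exp (g t - g σ)
      = NormedSpace.exp (g t) := by
    intro t ht
    rw [← NormedSpace.exp_add_of_commute ((hc t ht).sub_right (Commute.refl (g σ)))]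
    congr 1; abel
  have h2 : HasDerivWithinAt (fun t => NormedSpace.exp (g t - g σ)) g' s σ := by
    have hsub : HasDerivWithinAt (fun t => g t - g σ) g' s σ := hg.sub_const _
    have h0 : HasFDerivAt (NormedSpace.exp) (1 : 𝔸 →L[ℝ] 𝔸) ((fun t => g t - g σ) σ) := by
      simpa using (hasFDerivAt_exp_zero : HasFDerivAt (NormedSpace.exp) (1 : 𝔸 →L[ℝ] 𝔸) 0)
    exact h0.comp_hasDerivWithinAt σ hsub
  have h3 : HasDerivWithinAt (fun t => NormedSpace.exp (g σ) * NormedSpace.exp (g t - g σ))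
      (NormedSpace.exp (g σ) * g') s σ := h2.const_mul _
  exact h3.congr (fun t ht => (key t ht).symm) (key σ hσ).symm

/-- For a continuous family of pairwise commuting matrices, the fundamental
solution of `F' = F * A`, `F(0) = 1` is the ordinary matrix exponential of the
entrywise integral. -/
theorem stmt_13 (n : ℕ) (lam : ℝ) (hlam : 0 < lam)
    (A : ℝ → Matrix (Fin n) (Fin n) ℝ) (hA : Continuous A)
    (hcomm : ∀ σ ∈ Set.Icc (0 : ℝ) lam, ∀ τ ∈ Set.Icc (0 : ℝ) lam,
      A σ * A τ = A τ * A σ)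
    (F : ℝ → Matrix (Fin n) (Fin n) ℝ)
    (hF0 : F 0 = 1)
    (hF : ∀ σ, HasDerivAt F (F σ * A σ) σ) :
    ∀ σ ∈ Set.Icc (0 : ℝ) lam,
      F σ = NormedSpace.exp (∫ τ in (0 : ℝ)..σ, A τ) := by
  set B : ℝ → Matrix (Fin n) (Fin n) ℝ := fun σ => ∫ τ in (0 : ℝ)..σ, A τ with hBdef
  have hInt := fun a b : ℝ => hA.intervalIntegrable (μ := MeasureTheory.volume) a b
  haveI : TopologicalSpace.PseudoMetrizableSpace (Matrix (Fin n) (Fin n) ℝ) :=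
    inferInstanceAs (TopologicalSpace.PseudoMetrizableSpace (Fin n → Fin n → ℝ))
  have hBderiv : ∀ σ : ℝ, HasDerivAt B (A σ) σ := fun σ =>
    intervalIntegral.integral_hasDerivAt_right (hInt 0 σ)
      (hA.stronglyMeasurable (β := Matrix (Fin n) (Fin n) ℝ)).stronglyMeasurableAtFilter hA.continuousAt
  have hBcont : Continuous B :=
    (Differentiable.continuous fun σ => (hBderiv σ).differentiableAt)
  -- A s commutes with B t for s, t in the interval
  have hAB : ∀ s ∈ Set.Icc (0 : ℝ) lam, ∀ t ∈ Set.Icc (0 : ℝ) lam, Commute (A s) (B t) := by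
    intro s hs t ht
    have h1 : A s * B t = ∫ τ in (0 : ℝ)..t, A s * A τ :=
      (ContinuousLinearMap.intervalIntegral_comp_comm (ContinuousLinearMap.mul ℝ (Matrix (Fin n) (Fin n) ℝ) (A s)) (hInt 0 t)).symm
    have h2 : B t * A s = ∫ τ in (0 : ℝ)..t, A τ * A s :=
      (ContinuousLinearMap.intervalIntegral_comp_comm ((ContinuousLinearMap.mul ℝ (Matrix (Fin n) (Fin n) ℝ)).flip (A s)) (hInt 0 t)).symm
    have h3 : (∫ τ in (0 : ℝ)..t, A s * A τ) = ∫ τ in (0 : ℝ)..t, A τ * A s := by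
      apply intervalIntegral.integral_congr
      intro τ hτ
      rw [Set.uIcc_of_le ht.1] at hτ
      exact hcomm s hs τ ⟨hτ.1, hτ.2.trans ht.2⟩
    show A s * B t = B t * A s
    rw [h1, h3, h2]
  -- B s commutes with B t for s, t in the interval
  have hBB : ∀ s ∈ Set.Icc (0 : ℝ) lam, ∀ t ∈ Set.Icc (0 : ℝ) lam, Commute (B s) (B t) := by
    intro s hs t ht
    have h1 : B s * B t = ∫ τ in (0 : ℝ)..s, A τ * B t :=
      (ContinuousLinearMap.intervalIntegral_comp_comm ((ContinuousLinearMap.mul ℝ (Matrix (Fin n) (Fin n) ℝ)).flip (B t)) (hInt 0 s)).symm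
    have h2 : B t * B s = ∫ τ in (0 : ℝ)..s, B t * A τ :=
      (ContinuousLinearMap.intervalIntegral_comp_comm (ContinuousLinearMap.mul ℝ (Matrix (Fin n) (Fin n) ℝ) (B t)) (hInt 0 s)).symm
    have h3 : (∫ τ in (0 : ℝ)..s, A τ * B t) = ∫ τ in (0 : ℝ)..s, B t * A τ := by
      apply intervalIntegral.integral_congr
      intro τ hτ
      rw [Set.uIcc_of_le hs.1] at hτ
      exact (hAB τ ⟨hτ.1, hτ.2.trans hs.2⟩ t ht).eq
    show B s * B t = B t * B s
    rw [h1, h3, h2]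
  -- the auxiliary function H = F * exp(-B) has zero derivative on the interval
  set H : ℝ → Matrix (Fin n) (Fin n) ℝ := fun t => F t * NormedSpace.exp (-B t) with hHdef
  have hHderiv : ∀ σ ∈ Set.Icc (0 : ℝ) lam,
      HasDerivWithinAt H 0 (Set.Icc (0 : ℝ) lam) σ := by
    intro σ hσ
    have hexp : HasDerivWithinAt (fun t => NormedSpace.exp (-B t))
        (NormedSpace.exp (-B σ) * (-(A σ))) (Set.Icc (0 : ℝ) lam) σ := by
      refine exp_comp_hasDerivWithinAt hσ ((hBderiv σ).hasDerivWithinAt.neg) ?_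
      intro t ht
      exact ((hBB σ hσ t ht).neg_left).neg_right
    have hmul := ((hF σ).hasDerivWithinAt).mul hexp
    have hcE : Commute (A σ) (NormedSpace.exp (-B σ)) :=
      ((hAB σ hσ σ hσ).neg_right).exp_right
    have hzero : F σ * A σ * NormedSpace.exp (-B σ)
        + F σ * (NormedSpace.exp (-B σ) * -A σ) = 0 := by
      rw [mul_neg, ← hcE.eq, mul_neg, ← mul_assoc]
      exact add_neg_cancel _
    exact hzero ▸ hmul
  have hHcont : ContinuousOn H (Set.Icc (0 : ℝ) lam) := by
    have hFc : Continuous F := Differentiable.continuous fun σ => (hF σ).differentiableAt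
    exact (hFc.mul (NormedSpace.exp_continuous.comp hBcont.neg)).continuousOn
  have hHconst : ∀ σ ∈ Set.Icc (0 : ℝ) lam, H σ = H 0 := by
    apply constant_of_has_deriv_right_zero hHcont
    intro x hx
    exact (hHderiv x ⟨hx.1, hx.2.le⟩).mono_of_mem_nhdsWithin
      (Icc_mem_nhdsGE_of_mem ⟨hx.1, hx.2⟩)
  have hH0 : H 0 = 1 := by
    simp [hHdef, hF0, hBdef, intervalIntegral.integral_same, NormedSpace.exp_zero]
  intro σ hσ
  have h1 : F σ * NormedSpace.exp (-B σ) = 1 := (hHconst σ hσ).trans hH0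
  have h2 : NormedSpace.exp (-B σ) * NormedSpace.exp (B σ) = 1 := by
    have := NormedSpace.exp_add_of_commute (Commute.neg_left (Commute.refl (B σ)))
    rw [neg_add_cancel, NormedSpace.exp_zero] at this
    exact this.symm
  calc F σ = F σ * (NormedSpace.exp (-B σ) * NormedSpace.exp (B σ)) := by rw [h2, mul_one]
    _ = (F σ * NormedSpace.exp (-B σ)) * NormedSpace.exp (B σ) := by rw [mul_assoc]
    _ = NormedSpace.exp (B σ) := by rw [h1, one_mul]
end

section
/- Let A : ℝ → Matrix (Fin n) (Fin n) ℝ be continuous and F the solution of F'(λ) = F(λ) * A(λ), F(0) = 1. Then det F satisfies Liouville's formula: det F(λ) = exp(∫₀^λ trace(A(σ)) dσ); in particular F(λ) is invertible for all λ. -/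
attribute [local instance] Matrix.linftyOpNormedRing Matrix.linftyOpNormedAlgebra

/-- The entry map as a linear map. -/
def entryLM (n : ℕ) (i j : Fin n) : Matrix (Fin n) (Fin n) ℝ →ₗ[ℝ] ℝ where
  toFun M := M i j
  map_add' _ _ := rfl
  map_smul' _ _ := rfl

lemma hasDerivAt_entry {n : ℕ} {F : ℝ → Matrix (Fin n) (Fin n) ℝ}
    {M' : Matrix (Fin n) (Fin n) ℝ} {t : ℝ} (hF : HasDerivAt F M' t) (i j : Fin n) :
    HasDerivAt (fun s => F s i j) (M' i j) t := by
  have := ((entryLM n i j).toContinuousLinearMap.hasFDerivAt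
    (x := F t)).comp_hasDerivAt t hF
  exact this

lemma hasDerivAt_det {n : ℕ} {F : ℝ → Matrix (Fin n) (Fin n) ℝ}
    {M' : Matrix (Fin n) (Fin n) ℝ} {t : ℝ} (hF : HasDerivAt F M' t) :
    HasDerivAt (fun s => (F s).det)
      (∑ i, ((F t).updateCol i (fun k => M' k i)).det) t := by
  have h1 : ∀ σ : Equiv.Perm (Fin n),
      HasDerivAt (fun s => ∏ j, F s (σ j) j)
        (∑ i, (∏ j ∈ Finset.univ.erase i, F t (σ j) j) • M' (σ i) i) t :=
    fun σ => HasDerivAt.fun_finsetProd (fun i _ => hasDerivAt_entry hF (σ i) i)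
  have h2 := HasDerivAt.fun_sum
    (u := (Finset.univ : Finset (Equiv.Perm (Fin n))))
    (fun σ _ => (h1 σ).const_smul ((Equiv.Perm.sign σ : ℤ) : ℝ))
  convert h2 using 1
  · exact rfl
  · exact rfl
  · funext s
    rw [Matrix.det_apply']
    simp [Equiv.Perm.sign, smul_eq_mul]
  · -- value equality
    simp only [Finset.smul_sum]
    rw [Finset.sum_comm]
    refine Finset.sum_congr rfl fun i _ => ?_
    rw [Matrix.det_apply']
    refine Finset.sum_congr rfl fun σ _ => ?_
    simp only [smul_eq_mul]
    have : (∏ j, ((F t).updateCol i fun k => M' k i) (σ j) j)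
        = M' (σ i) i * ∏ j ∈ Finset.univ.erase i, F t (σ j) j := by
      rw [← Finset.mul_prod_erase _ _ (Finset.mem_univ i)]
      congr 1
      · simp [Matrix.updateCol_apply]
      · refine Finset.prod_congr rfl fun j hj => ?_
        rw [Matrix.updateCol_apply, if_neg (Finset.ne_of_mem_erase hj)]
    rw [this]
    ring

lemma sum_det_updateColumn {n : ℕ} (M : Matrix (Fin n) (Fin n) ℝ)
    (A : Matrix (Fin n) (Fin n) ℝ) :
    (∑ i, (M.updateCol i (fun k => (M * A) k i)).det) = M.det * A.trace := by
  have key : ∀ i : Fin n,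
      (M.updateCol i (fun k => (M * A) k i)).det = A i i * M.det := by
    intro i
    have hb : (fun k => (M * A) k i) = ∑ l, A l i • (fun k => M k l) := by
      funext k
      simp [Matrix.mul_apply, Finset.sum_apply, mul_comm]
    rw [← Matrix.cramer_apply, hb, map_sum, Finset.sum_apply]
    rw [Finset.sum_eq_single i]
    · rw [map_smul, Pi.smul_apply, Matrix.cramer_apply, smul_eq_mul]
      rw [Matrix.updateCol_eq_self]
    · intro l _ hl
      rw [map_smul, Pi.smul_apply, Matrix.cramer_apply, smul_eq_mul]
      rw [Matrix.det_zero_of_column_eq (Ne.symm hl) (by simp [Matrix.updateCol_apply])]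
      simp
    · simp
  rw [Finset.sum_congr rfl fun i _ => key i, ← Finset.sum_mul, Matrix.trace]
  simp [Matrix.diag, mul_comm]

/-- Liouville's formula: the determinant of the fundamental solution of
`F' = F * A`, `F(0) = 1` is `exp (∫₀^λ trace (A σ) dσ)`; in particular `F(λ)` is
invertible for every `λ`. -/
theorem stmt_19 (n : ℕ) (A : ℝ → Matrix (Fin n) (Fin n) ℝ) (hA : Continuous A)
    (F : ℝ → Matrix (Fin n) (Fin n) ℝ)
    (hF0 : F 0 = 1)
    (hF : ∀ t, HasDerivAt F (F t * A t) t) :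
    ∀ t : ℝ,
      (F t).det = Real.exp (∫ σ in (0 : ℝ)..t, Matrix.trace (A σ)) ∧
      IsUnit (F t) := by
  -- derivative of the determinant
  have hdet : ∀ t, HasDerivAt (fun s => (F s).det)
      ((F t).det * (A t).trace) t := by
    intro t
    have := hasDerivAt_det (hF t)
    rwa [sum_det_updateColumn] at this
  -- continuity of the trace of A
  have htrA : Continuous fun t => (A t).trace := by
    have : Continuous (Matrix.traceLinearMap (Fin n) ℝ ℝ).toContinuousLinearMap :=
      (Matrix.traceLinearMap (Fin n) ℝ ℝ).toContinuousLinearMap.continuous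
    exact this.comp hA
  -- the integral of the trace
  set u : ℝ → ℝ := fun t => ∫ σ in (0 : ℝ)..t, Matrix.trace (A σ) with hu_def
  have hu : ∀ t, HasDerivAt u (Matrix.trace (A t)) t := fun t =>
    (htrA.integral_hasStrictDerivAt 0 t).hasDerivAt
  -- the auxiliary function h = det F * exp (-u) is constant
  have hh : ∀ t, HasDerivAt (fun s => (F s).det * Real.exp (-u s)) 0 t := by
    intro t
    have h1 : HasDerivAt (fun s => Real.exp (-u s))
        (Real.exp (-u t) * (-(Matrix.trace (A t)))) t :=
      (((hu t).neg).exp)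
    have := (hdet t).mul h1
    convert this using 1
    · exact rfl
    · exact rfl
    · exact rfl
    ring
  have hconst : ∀ t, (F t).det * Real.exp (-u t) = 1 := by
    have hc : ∀ t, (fun s => (F s).det * Real.exp (-u s)) t
        = (fun s => (F s).det * Real.exp (-u s)) 0 := by
      intro t
      exact is_const_of_deriv_eq_zero (fun x => (hh x).differentiableAt)
        (fun x => (hh x).deriv) t 0
    intro t
    have h0 : u 0 = 0 := by simp [hu_def]
    simpa [hF0, h0] using hc t
  intro t
  have hdet_eq : (F t).det = Real.exp (u t) := by
    have := hconst t
    have hne : Real.exp (-u t) ≠ 0 := Real.exp_ne_zero _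
    rw [Real.exp_neg, mul_inv_eq_one₀ (Real.exp_ne_zero _)] at this
    linarith [this]
  refine ⟨hdet_eq, ?_⟩
  exact (Matrix.isUnit_iff_isUnit_det _).mpr
    (by rw [hdet_eq]; exact (Real.exp_pos _).ne'.isUnit)
end
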